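/- arXiv:0803.0811 — 2 statements merged into one kernel-verified Lean document; each statement's English description precedes it below -/
import Mathlib

section
/- Let Φ ∈ ℝ^{m×N}, let I, J be disjoint index sets with δ_{|I|+|J|} < 1, and let y ∈ span(Φ_I). Let y_r = y - proj(y, Φ_J) be the projection residue. Then (1 - δ_{|I|+|J|}/(1 - δ_{max(|I|,|J|)})) ‖y‖₂ ≤ ‖y_r‖₂ ≤ ‖y‖₂. -/
open scoped BigOperators

/-- Squared-sum Euclidean norm of a finite vector. -/
noncomputable def l2norm {ι : Type*} [Fintype ι] (v : ι → ℝ) : ℝ :=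
  Real.sqrt (∑ i, v i ^ 2)

/-- The ℓ₁ norm of a finite vector. -/
noncomputable def l1norm {ι : Type*} [Fintype ι] (v : ι → ℝ) : ℝ :=
  ∑ i, |v i|

/-- `Φ_I q`: the product of the column submatrix `Φ_I` with a coefficient vector `q`. -/
noncomputable def colMul {m N : ℕ} (Φ : Matrix (Fin m) (Fin N) ℝ) (I : Finset (Fin N))
    (q : I → ℝ) : Fin m → ℝ :=
  fun r => ∑ i : I, Φ r i.1 * q i

/-- `Φ_I^* y`: the transpose of the column submatrix applied to `y`. -/
noncomputable def colTMul {m N : ℕ} (Φ : Matrix (Fin m) (Fin N) ℝ) (I : Finset (Fin N))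
    (y : Fin m → ℝ) : I → ℝ :=
  fun i => ∑ r, Φ r i.1 * y r

/-- The Gram matrix `Φ_I^* Φ_I`. -/
noncomputable def gram {m N : ℕ} (Φ : Matrix (Fin m) (Fin N) ℝ) (I : Finset (Fin N)) :
    Matrix I I ℝ :=
  fun i j => ∑ r, Φ r i.1 * Φ r j.1

/-- `Φ` satisfies the restricted isometry property at sparsity `K` with parameter `δ`. -/
def IsRIP {m N : ℕ} (Φ : Matrix (Fin m) (Fin N) ℝ) (K : ℕ) (δ : ℝ) : Prop :=
  ∀ I : Finset (Fin N), I.card ≤ K → ∀ q : I → ℝ,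
    (1 - δ) * ∑ i, q i ^ 2 ≤ ∑ r, (colMul Φ I q r) ^ 2 ∧
      ∑ r, (colMul Φ I q r) ^ 2 ≤ (1 + δ) * ∑ i, q i ^ 2

/-- The RIP constant `δ_K`: the infimum of all admissible RIP parameters. -/
noncomputable def ripConst {m N : ℕ} (Φ : Matrix (Fin m) (Fin N) ℝ) (K : ℕ) : ℝ :=
  sInf {δ : ℝ | 0 ≤ δ ∧ IsRIP Φ K δ}

/-- Projection coefficients `(Φ_I^* Φ_I)⁻¹ Φ_I^* y`. -/
noncomputable def projCoeff {m N : ℕ} (Φ : Matrix (Fin m) (Fin N) ℝ) (I : Finset (Fin N))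
    (y : Fin m → ℝ) : I → ℝ :=
  (gram Φ I)⁻¹.mulVec (colTMul Φ I y)

/-- Orthogonal projection of `y` onto the column span of `Φ_I`. -/
noncomputable def projVec {m N : ℕ} (Φ : Matrix (Fin m) (Fin N) ℝ) (I : Finset (Fin N))
    (y : Fin m → ℝ) : Fin m → ℝ :=
  colMul Φ I (projCoeff Φ I y)



noncomputable def extv {N : ℕ} (I : Finset (Fin N)) (q : I → ℝ) : Fin N → ℝ :=
  fun i => if h : i ∈ I then q ⟨i, h⟩ else 0

lemma extv_mem {N : ℕ} (I : Finset (Fin N)) (q : I → ℝ) (i : I) : extv I q i.1 = q i := by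
  simp [extv]

lemma extv_notMem {N : ℕ} (I : Finset (Fin N)) (q : I → ℝ) {i : Fin N} (h : i ∉ I) :
    extv I q i = 0 := by simp [extv, h]

lemma colMul_eq_sum {m N : ℕ} (Φ : Matrix (Fin m) (Fin N) ℝ) (I : Finset (Fin N))
    (q : I → ℝ) (r : Fin m) :
    colMul Φ I q r = ∑ i ∈ I, Φ r i * extv I q i := by
  rw [colMul, ← Finset.sum_attach I (fun i => Φ r i * extv I q i)]
  exact Finset.sum_congr rfl fun i _ => by rw [extv_mem]

lemma sumsq_eq {N : ℕ} (I : Finset (Fin N)) (q : I → ℝ) :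
    ∑ i, q i ^ 2 = ∑ i ∈ I, (extv I q i) ^ 2 := by
  rw [← Finset.sum_attach I (fun i => (extv I q i) ^ 2)]
  exact Finset.sum_congr rfl fun i _ => by rw [extv_mem]

noncomputable def unionVec {N : ℕ} (I J : Finset (Fin N)) (a : I → ℝ) (c : J → ℝ) :
    ↥(I ∪ J) → ℝ :=
  fun i => extv I a i.1 + extv J c i.1

lemma extv_unionVec {N : ℕ} (I J : Finset (Fin N)) (a : I → ℝ) (c : J → ℝ) (i : Fin N) :
    extv (I ∪ J) (unionVec I J a c) i = extv I a i + extv J c i := by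
  by_cases h : i ∈ I ∪ J
  · have : extv (I ∪ J) (unionVec I J a c) i = unionVec I J a c ⟨i, h⟩ := extv_mem _ _ ⟨i, h⟩
    rw [this]; rfl
  · rw [extv_notMem _ _ h, extv_notMem _ _ (fun hi => h (Finset.mem_union_left _ hi)),
      extv_notMem _ _ (fun hi => h (Finset.mem_union_right _ hi))]
    ring

lemma colMul_unionVec {m N : ℕ} (Φ : Matrix (Fin m) (Fin N) ℝ) {I J : Finset (Fin N)}
    (a : I → ℝ) (c : J → ℝ) (r : Fin m) :
    colMul Φ (I ∪ J) (unionVec I J a c) r = colMul Φ I a r + colMul Φ J c r := by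
  rw [colMul_eq_sum, colMul_eq_sum, colMul_eq_sum]
  have : ∀ i ∈ I ∪ J, Φ r i * extv (I ∪ J) (unionVec I J a c) i
      = Φ r i * extv I a i + Φ r i * extv J c i := by
    intro i _; rw [extv_unionVec]; ring
  rw [Finset.sum_congr rfl this, Finset.sum_add_distrib]
  congr 1
  · exact (Finset.sum_subset Finset.subset_union_left (fun i _ hi => by
      rw [extv_notMem _ _ hi, mul_zero])).symm
  · exact (Finset.sum_subset Finset.subset_union_right (fun i _ hi => by
      rw [extv_notMem _ _ hi, mul_zero])).symm

lemma sumsq_unionVec {N : ℕ} {I J : Finset (Fin N)} (hIJ : Disjoint I J)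
    (a : I → ℝ) (c : J → ℝ) :
    ∑ i, (unionVec I J a c i) ^ 2 = (∑ i, a i ^ 2) + ∑ j, c j ^ 2 := by
  rw [sumsq_eq, sumsq_eq, sumsq_eq]
  have : ∀ i ∈ I ∪ J, (extv (I ∪ J) (unionVec I J a c) i) ^ 2
      = (extv I a i) ^ 2 + (extv J c i) ^ 2 := by
    intro i _
    rw [extv_unionVec]
    by_cases h : i ∈ I
    · rw [extv_notMem J c (Finset.disjoint_left.mp hIJ h)]; ring
    · rw [extv_notMem I a h]; ring
  rw [Finset.sum_congr rfl this, Finset.sum_add_distrib]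
  congr 1
  · exact (Finset.sum_subset Finset.subset_union_left (fun i _ hi => by
      rw [extv_notMem _ _ hi]; ring)).symm
  · exact (Finset.sum_subset Finset.subset_union_right (fun i _ hi => by
      rw [extv_notMem _ _ hi]; ring)).symm



lemma ripSet_nonempty {m N : ℕ} (Φ : Matrix (Fin m) (Fin N) ℝ) (K : ℕ) :
    {δ : ℝ | 0 ≤ δ ∧ IsRIP Φ K δ}.Nonempty := by
  set C : ℝ := ∑ r, ∑ i, Φ r i ^ 2 with hC
  have hC0 : 0 ≤ C := Finset.sum_nonneg fun r _ => Finset.sum_nonneg fun i _ => sq_nonneg _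
  refine ⟨1 + C, by linarith, fun I hI q => ?_⟩
  have hq0 : 0 ≤ ∑ i, q i ^ 2 := Finset.sum_nonneg fun i _ => sq_nonneg _
  have hcol0 : ∀ r, 0 ≤ (colMul Φ I q r) ^ 2 := fun r => sq_nonneg _
  constructor
  · have : (1 - (1 + C)) * ∑ i, q i ^ 2 ≤ 0 := by nlinarith
    exact this.trans (Finset.sum_nonneg fun r _ => hcol0 r)
  · have key : ∀ r, (colMul Φ I q r) ^ 2 ≤ (∑ i, Φ r i ^ 2) * ∑ i, q i ^ 2 := by
      intro r
      have cs := Finset.sum_mul_sq_le_sq_mul_sq Finset.univ (fun i : I => Φ r i.1)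
        (fun i : I => q i)
      refine cs.trans (mul_le_mul_of_nonneg_right ?_ hq0)
      calc (∑ i : I, Φ r i.1 ^ 2) = ∑ i ∈ I, Φ r i ^ 2 :=
            Finset.sum_attach I (fun i => Φ r i ^ 2)
        _ ≤ ∑ i, Φ r i ^ 2 :=
            Finset.sum_le_sum_of_subset_of_nonneg (Finset.subset_univ I)
              (fun i _ _ => sq_nonneg _)
    calc ∑ r, (colMul Φ I q r) ^ 2 ≤ ∑ r, (∑ i, Φ r i ^ 2) * ∑ i, q i ^ 2 :=
          Finset.sum_le_sum fun r _ => key r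
      _ = C * ∑ i, q i ^ 2 := by rw [hC, Finset.sum_mul]
      _ ≤ (1 + (1 + C)) * ∑ i, q i ^ 2 := by nlinarith

lemma ripSet_bdd {m N : ℕ} (Φ : Matrix (Fin m) (Fin N) ℝ) (K : ℕ) :
    BddBelow {δ : ℝ | 0 ≤ δ ∧ IsRIP Φ K δ} :=
  ⟨0, fun _ hx => hx.1⟩

lemma ripConst_nonneg {m N : ℕ} (Φ : Matrix (Fin m) (Fin N) ℝ) (K : ℕ) :
    0 ≤ ripConst Φ K :=
  le_csInf (ripSet_nonempty Φ K) fun _ hx => hx.1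

lemma isRIP_ripConst {m N : ℕ} (Φ : Matrix (Fin m) (Fin N) ℝ) (K : ℕ) :
    IsRIP Φ K (ripConst Φ K) := by
  intro I hI q
  set s := ripConst Φ K with hs
  set A := ∑ i, q i ^ 2 with hA
  set B := ∑ r, (colMul Φ I q r) ^ 2 with hB
  have hA0 : 0 ≤ A := Finset.sum_nonneg fun i _ => sq_nonneg _
  have key : ∀ ε : ℝ, 0 < ε → (1 - s) * A ≤ B + ε ∧ B ≤ (1 + s) * A + ε := by
    intro ε hε
    rcases eq_or_lt_of_le hA0 with hA0' | hA0'
    · -- A = 0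
      obtain ⟨x, hx, hxs⟩ := Real.lt_sInf_add_pos (ripSet_nonempty Φ K) hε
      have h1 := (hx.2 I hI q).1
      have h2 := (hx.2 I hI q).2
      rw [← hA, ← hB] at h1 h2
      have hB0 : 0 ≤ B := Finset.sum_nonneg fun r _ => sq_nonneg _
      rw [← hA0'] at h2
      constructor
      · rw [← hA0']; nlinarith
      · rw [← hA0']; nlinarith
    · obtain ⟨x, hx, hxs⟩ := Real.lt_sInf_add_pos (ripSet_nonempty Φ K) (div_pos hε hA0')
      have hxge : s ≤ x := csInf_le (ripSet_bdd Φ K) hx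
      have h1 := (hx.2 I hI q).1
      have h2 := (hx.2 I hI q).2
      rw [← hA, ← hB] at h1 h2
      have hxlt : x < s + ε / A := hxs
      have hd : ε / A * A = ε := div_mul_cancel₀ ε (ne_of_gt hA0')
      constructor
      · nlinarith
      · nlinarith
  constructor
  · have : ∀ ε : ℝ, 0 < ε → (1 - s) * A ≤ B + ε := fun ε hε => (key ε hε).1
    exact le_of_forall_pos_le_add this
  · exact le_of_forall_pos_le_add fun ε hε => (key ε hε).2

lemma ripConst_mono {m N : ℕ} (Φ : Matrix (Fin m) (Fin N) ℝ) {K K' : ℕ} (h : K' ≤ K) :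
    ripConst Φ K' ≤ ripConst Φ K := by
  apply csInf_le_csInf (ripSet_bdd Φ K') (ripSet_nonempty Φ K)
  rintro x ⟨hx0, hx⟩
  exact ⟨hx0, fun I hI q => hx I (hI.trans h) q⟩

lemma colMul_smul {m N : ℕ} (Φ : Matrix (Fin m) (Fin N) ℝ) (I : Finset (Fin N))
    (t : ℝ) (a : I → ℝ) (r : Fin m) :
    colMul Φ I (fun i => t * a i) r = t * colMul Φ I a r := by
  simp only [colMul, Finset.mul_sum]
  exact Finset.sum_congr rfl fun i _ => by ring

lemma colMul_neg {m N : ℕ} (Φ : Matrix (Fin m) (Fin N) ℝ) (I : Finset (Fin N))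
    (a : I → ℝ) (r : Fin m) :
    colMul Φ I (fun i => -(a i)) r = -(colMul Φ I a r) := by
  simp only [colMul, ← Finset.sum_neg_distrib]
  exact Finset.sum_congr rfl fun i _ => by ring

/-- Cross inner-product bound for unit-norm coefficient vectors. -/
lemma cross_bound_unit {m N : ℕ} (Φ : Matrix (Fin m) (Fin N) ℝ) {I J : Finset (Fin N)}
    (hIJ : Disjoint I J) {δ : ℝ} (hR : IsRIP Φ (I.card + J.card) δ)
    (a : I → ℝ) (c : J → ℝ) (ha : ∑ i, a i ^ 2 = 1) (hc : ∑ j, c j ^ 2 = 1) :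
    |∑ r, colMul Φ I a r * colMul Φ J c r| ≤ δ := by
  have hcard : (I ∪ J).card ≤ I.card + J.card :=
    le_of_eq (Finset.card_union_of_disjoint hIJ)
  have h1 := hR (I ∪ J) hcard (unionVec I J a c)
  have h2 := hR (I ∪ J) hcard (unionVec I J a (fun j => -(c j)))
  rw [sumsq_unionVec hIJ] at h1 h2
  have hcn : ∑ j, (-(c j)) ^ 2 = 1 := by simpa using hc
  rw [ha, hc] at h1
  rw [ha, hcn] at h2
  set D := ∑ r, colMul Φ I a r * colMul Φ J c r with hD
  have e1 : ∑ r, (colMul Φ (I ∪ J) (unionVec I J a c) r) ^ 2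
      = (∑ r, (colMul Φ I a r) ^ 2) + 2 * D + ∑ r, (colMul Φ J c r) ^ 2 := by
    simp only [colMul_unionVec, hD, add_sq]
    rw [Finset.sum_add_distrib, Finset.sum_add_distrib, Finset.mul_sum]
    ring
  have e2 : ∑ r, (colMul Φ (I ∪ J) (unionVec I J a (fun j => -(c j))) r) ^ 2
      = (∑ r, (colMul Φ I a r) ^ 2) - 2 * D + ∑ r, (colMul Φ J c r) ^ 2 := by
    have : ∀ r, colMul Φ (I ∪ J) (unionVec I J a (fun j => -(c j))) r
        = colMul Φ I a r - colMul Φ J c r := by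
      intro r; rw [colMul_unionVec, colMul_neg]; ring
    simp only [this, sub_sq, hD]
    rw [Finset.sum_add_distrib, Finset.sum_sub_distrib, Finset.mul_sum]
    ring
  rw [e1] at h1
  rw [e2] at h2
  rw [abs_le]
  constructor <;> nlinarith [h1.1, h1.2, h2.1, h2.2]

/-- Cross inner-product bound, general version. -/
lemma cross_bound {m N : ℕ} (Φ : Matrix (Fin m) (Fin N) ℝ) {I J : Finset (Fin N)}
    (hIJ : Disjoint I J) {δ : ℝ} (hδ0 : 0 ≤ δ) (hR : IsRIP Φ (I.card + J.card) δ)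
    (a : I → ℝ) (c : J → ℝ) :
    |∑ r, colMul Φ I a r * colMul Φ J c r|
      ≤ δ * Real.sqrt (∑ i, a i ^ 2) * Real.sqrt (∑ j, c j ^ 2) := by
  have hA0 : 0 ≤ ∑ i, a i ^ 2 := Finset.sum_nonneg fun i _ => sq_nonneg _
  have hC0 : 0 ≤ ∑ j, c j ^ 2 := Finset.sum_nonneg fun j _ => sq_nonneg _
  rcases eq_or_lt_of_le hA0 with hA | hA
  · have : ∀ i, a i = 0 := by
      intro i
      have := (Finset.sum_eq_zero_iff_of_nonneg (fun i _ => sq_nonneg (a i))).mp hA.symm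
      exact pow_eq_zero_iff two_ne_zero |>.mp (this i (Finset.mem_univ i))
    have hz : ∀ r, colMul Φ I a r = 0 := by
      intro r; simp [colMul, this]
    simp only [hz, zero_mul, Finset.sum_const_zero, abs_zero]
    positivity
  rcases eq_or_lt_of_le hC0 with hC | hC
  · have : ∀ j, c j = 0 := by
      intro j
      have := (Finset.sum_eq_zero_iff_of_nonneg (fun j _ => sq_nonneg (c j))).mp hC.symm
      exact pow_eq_zero_iff two_ne_zero |>.mp (this j (Finset.mem_univ j))
    have hz : ∀ r, colMul Φ J c r = 0 := by
      intro r; simp [colMul, this]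
    simp only [hz, mul_zero, Finset.sum_const_zero, abs_zero]
    positivity
  · set A := Real.sqrt (∑ i, a i ^ 2) with hAdef
    set C := Real.sqrt (∑ j, c j ^ 2) with hCdef
    have hApos : 0 < A := Real.sqrt_pos.mpr hA
    have hCpos : 0 < C := Real.sqrt_pos.mpr hC
    have hA2 : A ^ 2 = ∑ i, a i ^ 2 := Real.sq_sqrt hA0
    have hC2 : C ^ 2 = ∑ j, c j ^ 2 := Real.sq_sqrt hC0
    have ha' : ∑ i, (A⁻¹ * a i) ^ 2 = 1 := by
      simp only [mul_pow, ← Finset.mul_sum]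
      rw [← hA2]
      field_simp
    have hc' : ∑ j, (C⁻¹ * c j) ^ 2 = 1 := by
      simp only [mul_pow, ← Finset.mul_sum]
      rw [← hC2]
      field_simp
    have key := cross_bound_unit Φ hIJ hR (fun i => A⁻¹ * a i) (fun j => C⁻¹ * c j) ha' hc'
    have e : ∑ r, colMul Φ I (fun i => A⁻¹ * a i) r * colMul Φ J (fun j => C⁻¹ * c j) r
        = A⁻¹ * C⁻¹ * ∑ r, colMul Φ I a r * colMul Φ J c r := by
      simp only [colMul_smul, Finset.mul_sum]
      exact Finset.sum_congr rfl fun r _ => by ring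
    rw [e, abs_mul, abs_of_pos (by positivity : (0:ℝ) < A⁻¹ * C⁻¹)] at key
    calc |∑ r, colMul Φ I a r * colMul Φ J c r|
        = A * C * (A⁻¹ * C⁻¹ * |∑ r, colMul Φ I a r * colMul Φ J c r|) := by
          field_simp
      _ ≤ A * C * δ := by
          apply mul_le_mul_of_nonneg_left key (by positivity)
      _ = δ * A * C := by ring






lemma colTMul_colMul {m N : ℕ} (Φ : Matrix (Fin m) (Fin N) ℝ) (J : Finset (Fin N))
    (c : J → ℝ) : colTMul Φ J (colMul Φ J c) = (gram Φ J).mulVec c := by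
  funext j
  simp only [colTMul, colMul, Matrix.mulVec, dotProduct, gram, Finset.mul_sum]
  rw [Finset.sum_comm]
  refine Finset.sum_congr rfl fun i _ => ?_
  rw [Finset.sum_mul]
  exact Finset.sum_congr rfl fun r _ => by ring

lemma colTMul_projVec {m N : ℕ} (Φ : Matrix (Fin m) (Fin N) ℝ) (J : Finset (Fin N))
    (y : Fin m → ℝ) (hu : IsUnit (gram Φ J).det) :
    colTMul Φ J (projVec Φ J y) = colTMul Φ J y := by
  rw [projVec, colTMul_colMul, projCoeff, Matrix.mulVec_mulVec,
    Matrix.mul_nonsing_inv _ hu, Matrix.one_mulVec]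

lemma dot_colMul {m N : ℕ} (Φ : Matrix (Fin m) (Fin N) ℝ) (J : Finset (Fin N))
    (u : Fin m → ℝ) (c : J → ℝ) :
    ∑ r, u r * colMul Φ J c r = ∑ j, c j * colTMul Φ J u j := by
  simp only [colMul, colTMul, Finset.mul_sum]
  rw [Finset.sum_comm]
  exact Finset.sum_congr rfl fun j _ => Finset.sum_congr rfl fun r _ => by ring

lemma proj_orth {m N : ℕ} (Φ : Matrix (Fin m) (Fin N) ℝ) (J : Finset (Fin N))
    (y : Fin m → ℝ) (hu : IsUnit (gram Φ J).det) :
    ∑ r, (y r - projVec Φ J y r) * projVec Φ J y r = 0 := by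
  have key : ∀ j : J, colTMul Φ J (fun r => y r - projVec Φ J y r) j = 0 := by
    intro j
    have hj := congrFun (colTMul_projVec Φ J y hu) j
    simp only [colTMul] at hj ⊢
    simp only [mul_sub, Finset.sum_sub_distrib]
    rw [sub_eq_zero]
    exact hj.symm
  calc ∑ r, (y r - projVec Φ J y r) * projVec Φ J y r
      = ∑ r, (fun s => y s - projVec Φ J y s) r * colMul Φ J (projCoeff Φ J y) r := rfl
    _ = ∑ j, projCoeff Φ J y j * colTMul Φ J (fun s => y s - projVec Φ J y s) j :=
        dot_colMul Φ J _ _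
    _ = 0 := by
        refine Finset.sum_eq_zero fun j _ => ?_
        rw [key j, mul_zero]


lemma lower_arith {δK δM R Y P Sr Sy Sp : ℝ}
    (hδK0 : 0 ≤ δK) (hβ : 0 < 1 - δM)
    (pyth : Sy = Sr + Sp)
    (hkey : (1 - δM) ^ 2 * Sp ^ 2 ≤ δK ^ 2 * Sy * Sp)
    (hR2 : R ^ 2 = Sr) (hY2 : Y ^ 2 = Sy) (hP2 : P ^ 2 = Sp)
    (hR0 : 0 ≤ R) (hY0 : 0 ≤ Y) (hP0 : 0 ≤ P) :
    (1 - δK / (1 - δM)) * Y ≤ R := by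
  have hSp0 : 0 ≤ Sp := hP2 ▸ sq_nonneg P
  have htnn : 0 ≤ δK / (1 - δM) := div_nonneg hδK0 hβ.le
  have htri : Y ≤ R + P := by nlinarith [mul_nonneg hR0 hP0]
  rcases eq_or_lt_of_le hSp0 with h | h
  · have hP2z : P ^ 2 = 0 := by rw [hP2, ← h]
    have hPz : P = 0 := pow_eq_zero_iff two_ne_zero |>.mp hP2z
    nlinarith [mul_nonneg htnn hY0]
  · have hPpos : 0 < P := by nlinarith
    have h1 : ((1 - δM) * P) ^ 2 ≤ (δK * Y) ^ 2 := by
      have hkey' : (1 - δM) ^ 2 * (P ^ 2) ^ 2 ≤ δK ^ 2 * Y ^ 2 * P ^ 2 := by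
        rw [hP2, hY2]; exact hkey
      have h2 : ((1 - δM) ^ 2 * P ^ 2) * P ^ 2 ≤ (δK ^ 2 * Y ^ 2) * P ^ 2 := by
        nlinarith [hkey']
      have h3 := le_of_mul_le_mul_right h2 (by positivity : (0:ℝ) < P ^ 2)
      calc ((1 - δM) * P) ^ 2 = (1 - δM) ^ 2 * P ^ 2 := by ring
        _ ≤ δK ^ 2 * Y ^ 2 := h3
        _ = (δK * Y) ^ 2 := by ring
    have hbP : (1 - δM) * P ≤ δK * Y :=
      (pow_le_pow_iff_left₀ (mul_nonneg hβ.le hP0)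
        (mul_nonneg hδK0 hY0) two_ne_zero).mp h1
    have hfin : Y - R ≤ δK * Y / (1 - δM) := by
      rw [le_div_iff₀ hβ]
      nlinarith
    have he : (1 - δK / (1 - δM)) * Y = Y - δK * Y / (1 - δM) := by
      field_simp
    linarith

theorem residue_norm_bounds {m N : ℕ} (Φ : Matrix (Fin m) (Fin N) ℝ)
    (I J : Finset (Fin N)) (hIJ : Disjoint I J)
    (hδ : ripConst Φ (I.card + J.card) < 1)
    (y : Fin m → ℝ) (hy : ∃ a : I → ℝ, y = colMul Φ I a) :
    (1 - ripConst Φ (I.card + J.card) / (1 - ripConst Φ (max I.card J.card))) * l2norm y ≤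
        l2norm (y - projVec Φ J y) ∧
      l2norm (y - projVec Φ J y) ≤ l2norm y := by
  obtain ⟨a, ha⟩ := hy
  set δK := ripConst Φ (I.card + J.card) with hδKdef
  set δM := ripConst Φ (max I.card J.card) with hδMdef
  have hδK0 : 0 ≤ δK := ripConst_nonneg Φ _
  have hMK : δM ≤ δK := ripConst_mono Φ (max_le (Nat.le_add_right _ _) (Nat.le_add_left _ _))
  have hβ : 0 < 1 - δM := by linarith
  set p := projVec Φ J y with hpdef
  have hl2sub : l2norm (y - p) = Real.sqrt (∑ r, (y r - p r) ^ 2) := rfl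
  have hl2y : l2norm y = Real.sqrt (∑ r, y r ^ 2) := rfl
  have hYsq0 : 0 ≤ ∑ r, y r ^ 2 := Finset.sum_nonneg fun r _ => sq_nonneg _
  have hRsq0 : 0 ≤ ∑ r, (y r - p r) ^ 2 := Finset.sum_nonneg fun r _ => sq_nonneg _
  have hPsq0 : 0 ≤ ∑ r, p r ^ 2 := Finset.sum_nonneg fun r _ => sq_nonneg _
  have hY0 : 0 ≤ l2norm y := Real.sqrt_nonneg _
  have htnn : 0 ≤ δK / (1 - δM) := div_nonneg hδK0 hβ.le
  by_cases hu : IsUnit (gram Φ J).det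
  · -- genuine orthogonal projection
    have orth : ∑ r, (y r - p r) * p r = 0 := proj_orth Φ J y hu
    have pyth : ∑ r, y r ^ 2 = (∑ r, (y r - p r) ^ 2) + ∑ r, p r ^ 2 := by
      have e : ∀ r : Fin m, y r ^ 2
          = (y r - p r) ^ 2 + 2 * ((y r - p r) * p r) + p r ^ 2 := fun r => by ring
      calc ∑ r, y r ^ 2
          = ∑ r, ((y r - p r) ^ 2 + 2 * ((y r - p r) * p r) + p r ^ 2) :=
            Finset.sum_congr rfl fun r _ => e r
        _ = (∑ r, (y r - p r) ^ 2) + 2 * (∑ r, (y r - p r) * p r) + ∑ r, p r ^ 2 := by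
            rw [Finset.sum_add_distrib, Finset.sum_add_distrib, ← Finset.mul_sum]
        _ = (∑ r, (y r - p r) ^ 2) + ∑ r, p r ^ 2 := by rw [orth]; ring
    have hupper : l2norm (y - p) ≤ l2norm y := by
      rw [hl2sub, hl2y]
      exact Real.sqrt_le_sqrt (by linarith)
    refine ⟨?_, hupper⟩
    -- lower bound
    set c := projCoeff Φ J y with hcdef
    have hpc : ∀ r, p r = colMul Φ J c r := fun r => rfl
    have hD : ∑ r, y r * p r = ∑ r, p r ^ 2 := by
      have : ∑ r, (y r - p r) * p r = (∑ r, y r * p r) - ∑ r, p r ^ 2 := by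
        rw [← Finset.sum_sub_distrib]
        exact Finset.sum_congr rfl fun r _ => by ring
      linarith [orth, this.symm.trans orth]
    have hcross := cross_bound Φ hIJ hδK0 (isRIP_ripConst Φ (I.card + J.card)) a c
    have hDc : ∑ r, colMul Φ I a r * colMul Φ J c r = ∑ r, p r ^ 2 := by
      rw [← hD]
      exact Finset.sum_congr rfl fun r _ => by rw [← ha, ← hpc]
    rw [hDc] at hcross
    have hPle : ∑ r, p r ^ 2 ≤ δK * Real.sqrt (∑ i, a i ^ 2) * Real.sqrt (∑ j, c j ^ 2) :=
      (le_abs_self _).trans hcross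
    have hRM := isRIP_ripConst Φ (max I.card J.card)
    have h1 := (hRM I (le_max_left _ _) a).1
    have h2 := (hRM J (le_max_right _ _) c).1
    have h1' : (1 - δM) * ∑ i, a i ^ 2 ≤ ∑ r, y r ^ 2 := by
      refine h1.trans (le_of_eq ?_)
      exact Finset.sum_congr rfl fun r _ => by rw [← ha]
    have h2' : (1 - δM) * ∑ j, c j ^ 2 ≤ ∑ r, p r ^ 2 := by
      refine h2.trans (le_of_eq ?_)
      exact Finset.sum_congr rfl fun r _ => by rw [← hpc]
    have hA0 : 0 ≤ ∑ i, a i ^ 2 := Finset.sum_nonneg fun i _ => sq_nonneg _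
    have hC0 : 0 ≤ ∑ j, c j ^ 2 := Finset.sum_nonneg fun j _ => sq_nonneg _
    have hA2 : (Real.sqrt (∑ i, a i ^ 2)) ^ 2 = ∑ i, a i ^ 2 := Real.sq_sqrt hA0
    have hC2 : (Real.sqrt (∑ j, c j ^ 2)) ^ 2 = ∑ j, c j ^ 2 := Real.sq_sqrt hC0
    -- squared inequality
    have hsq : (∑ r, p r ^ 2) ^ 2 ≤ δK ^ 2 * (∑ i, a i ^ 2) * (∑ j, c j ^ 2) := by
      have hrhs0 : 0 ≤ δK * Real.sqrt (∑ i, a i ^ 2) * Real.sqrt (∑ j, c j ^ 2) := by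
        positivity
      have := mul_self_le_mul_self hPsq0 hPle
      calc (∑ r, p r ^ 2) ^ 2 = (∑ r, p r ^ 2) * (∑ r, p r ^ 2) := sq (∑ r, p r ^ 2) ▸ by ring
        _ ≤ (δK * Real.sqrt (∑ i, a i ^ 2) * Real.sqrt (∑ j, c j ^ 2))
            * (δK * Real.sqrt (∑ i, a i ^ 2) * Real.sqrt (∑ j, c j ^ 2)) := this
        _ = δK ^ 2 * (Real.sqrt (∑ i, a i ^ 2)) ^ 2 * (Real.sqrt (∑ j, c j ^ 2)) ^ 2 := by
            ring
        _ = δK ^ 2 * (∑ i, a i ^ 2) * (∑ j, c j ^ 2) := by rw [hA2, hC2]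
    have hkey : (1 - δM) ^ 2 * (∑ r, p r ^ 2) ^ 2
        ≤ δK ^ 2 * (∑ r, y r ^ 2) * (∑ r, p r ^ 2) := by
      nlinarith [mul_le_mul h1' h2' (by positivity) hYsq0]
    set R := l2norm (y - p) with hRdef
    set Y := l2norm y with hYdef
    have hR2 : R ^ 2 = ∑ r, (y r - p r) ^ 2 := by
      rw [show R = Real.sqrt (∑ r, (y r - p r) ^ 2) from hl2sub]
      exact Real.sq_sqrt hRsq0
    have hY2 : Y ^ 2 = ∑ r, y r ^ 2 := by
      rw [show Y = Real.sqrt (∑ r, y r ^ 2) from hl2y]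
      exact Real.sq_sqrt hYsq0
    have hR0 : 0 ≤ R := hl2sub ▸ Real.sqrt_nonneg _
    set P := Real.sqrt (∑ r, p r ^ 2) with hPdef
    have hP2 : P ^ 2 = ∑ r, p r ^ 2 := Real.sq_sqrt hPsq0
    have hP0 : 0 ≤ P := Real.sqrt_nonneg _
    exact lower_arith hδK0 hβ pyth hkey hR2 hY2 hP2 hR0 hY0 hP0
  · -- degenerate case: the Gram matrix is singular, so the projection is zero
    have hpz : p = 0 := by
      rw [hpdef, projVec, projCoeff, Matrix.nonsing_inv_apply_not_isUnit _ hu,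
        Matrix.zero_mulVec]
      funext r
      simp [colMul]
    have heq : l2norm (y - p) = l2norm y := by rw [hpz, sub_zero]
    refine ⟨?_, le_of_eq heq⟩
    rw [heq]
    nlinarith [mul_nonneg htnn hY0]
end

section
/- Let x ∈ ℝ^N be supported on T with |T| ≤ K, let y = Φx, and let T⁰ be a set of K indices maximizing ‖Φ_{T⁰}^* y‖₂ over all sets of size K (in particular ‖Φ_{T⁰}^* y‖₂ ≥ ‖Φ_T^* y‖₂). If Φ satisfies the RIP with constants δ_K, δ_{2K}, then ‖x_{T∩T⁰}‖₂ ≥ ((1 - δ_K - 2δ_{2K})/(1 + δ_K)) ‖x‖₂. -/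
open scoped BigOperators

/-!
Write `g = Φᵀ Φ x` and `v_S` for the restriction of `v` to `S`. The lower RIP bound and
Cauchy–Schwarz give `(1 - δ_K) ‖x‖² ≤ ‖Φ x‖² = ⟨x, g_T⟩ ≤ ‖x‖ ‖g_T‖ ≤ ‖x‖ ‖g_{T⁰}‖`, the last
step by maximality of `T⁰`. Polarizing the RIP gives `⟨Φ u, Φ v⟩ ≤ ⟨u, v⟩ + δ ‖u‖ ‖v‖` for `u, v`
supported on a common small set. Since `‖g_S‖` is the largest value of `⟨w, g⟩` over unit vectors
`w` supported on `S`, this yields `‖g_{T⁰ \ T}‖ ≤ δ_{2K} ‖x‖` (as `x` vanishes off `T`) and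
`‖g_{T ∩ T⁰}‖ ≤ (1 + δ_K) ‖x_{T ∩ T⁰}‖ + δ_K ‖x‖`. With `δ_K ≤ δ_{2K}` this bounds `‖g_{T⁰}‖`, and
dividing by `‖x‖` gives the claim.
-/

open Matrix Function

section L2

variable {ι : Type*} [Fintype ι]

theorem l2norm_eq_norm (v : ι → ℝ) : l2norm v = ‖(WithLp.toLp 2 v : EuclideanSpace ℝ ι)‖ := by
  simp [l2norm, EuclideanSpace.norm_eq]

theorem dotProduct_eq_inner (v w : ι → ℝ) :
    v ⬝ᵥ w = inner ℝ (WithLp.toLp 2 v : EuclideanSpace ℝ ι) (WithLp.toLp 2 w) := by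
  rw [EuclideanSpace.inner_toLp_toLp, dotProduct_comm]; rfl

theorem l2norm_nonneg (v : ι → ℝ) : 0 ≤ l2norm v := Real.sqrt_nonneg _

theorem l2norm_sq (v : ι → ℝ) : l2norm v ^ 2 = v ⬝ᵥ v := by
  rw [dotProduct_eq_inner, real_inner_self_eq_norm_sq, l2norm_eq_norm]

theorem l2norm_eq_zero {v : ι → ℝ} : l2norm v = 0 ↔ v = 0 := by
  rw [l2norm_eq_norm, norm_eq_zero, WithLp.toLp_eq_zero]

theorem dotProduct_le_l2norm_mul_l2norm (v w : ι → ℝ) : v ⬝ᵥ w ≤ l2norm v * l2norm w := by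
  rw [dotProduct_eq_inner, l2norm_eq_norm, l2norm_eq_norm]
  exact real_inner_le_norm _ _

theorem l2norm_add_le (v w : ι → ℝ) : l2norm (v + w) ≤ l2norm v + l2norm w := by
  simp only [l2norm_eq_norm, WithLp.toLp_add]
  exact norm_add_le _ _

theorem l2norm_indicator_le (s : Set ι) (v : ι → ℝ) : l2norm (s.indicator v) ≤ l2norm v := by
  refine Real.sqrt_le_sqrt (Finset.sum_le_sum fun i _ => ?_)
  by_cases hi : i ∈ s <;> simp [hi, sq_nonneg]

theorem l2norm_subtype (S : Finset ι) (v : ι → ℝ) :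
    l2norm (fun i : S => v i) = l2norm ((S : Set ι).indicator v) := by
  classical
  unfold l2norm
  rw [Finset.sum_coe_sort S (fun i => v i ^ 2), ← Finset.sum_indicator_subset _ S.subset_univ]
  congr 2 with i
  by_cases hi : i ∈ S <;> simp [hi]

theorem l2norm_indicator_le_inter_add_diff (s t : Set ι) (v : ι → ℝ) :
    l2norm (s.indicator v) ≤ l2norm ((t ∩ s).indicator v) + l2norm ((s \ t).indicator v) := by
  calc l2norm (s.indicator v)
      = l2norm (t.indicator (s.indicator v) + tᶜ.indicator (s.indicator v)) := by
        rw [Set.indicator_self_add_compl]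
    _ ≤ _ := l2norm_add_le _ _
    _ = _ := by rw [Set.indicator_indicator, Set.indicator_indicator, Set.sdiff_eq_compl_inter]

theorem dotProduct_indicator_of_support_subset {s : Set ι} {v : ι → ℝ}
    (hv : support v ⊆ s) (w : ι → ℝ) : v ⬝ᵥ s.indicator w = v ⬝ᵥ w := by
  refine Finset.sum_congr rfl fun i _ => ?_
  by_cases hi : i ∈ s
  · simp [hi]
  · simp [hi, support_subset_iff'.1 hv i hi]

theorem dotProduct_eq_zero_of_disjoint {v w : ι → ℝ} (h : Disjoint (support v) (support w)) :
    v ⬝ᵥ w = 0 := by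
  refine Finset.sum_eq_zero fun i _ => ?_
  by_cases hi : v i = 0
  · simp [hi]
  · simp [notMem_support.1 (Set.disjoint_left.1 h (mem_support.2 hi))]

theorem l2norm_indicator_le_of_forall_dotProduct_le {s : Set ι} {g : ι → ℝ} {c : ℝ} (hc : 0 ≤ c)
    (h : ∀ w, support w ⊆ s → w ⬝ᵥ g ≤ c * l2norm w) : l2norm (s.indicator g) ≤ c := by
  have hsq : l2norm (s.indicator g) ^ 2 ≤ c * l2norm (s.indicator g) := by
    rw [l2norm_sq, dotProduct_indicator_of_support_subset Set.support_indicator_subset]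
    exact h _ Set.support_indicator_subset
  nlinarith [l2norm_nonneg (s.indicator g)]

end L2

theorem sum_coe_sort_of_support_subset {ι M : Type*} [Fintype ι] [AddCommMonoid M] (S : Finset ι)
    {f : ι → M} (hf : support f ⊆ S) : ∑ i : S, f i = ∑ i, f i := by
  rw [Finset.sum_coe_sort]
  exact Finset.sum_subset S.subset_univ fun i _ hi => support_subset_iff'.1 hf i hi

section RIP

variable {m N : ℕ} {Φ : Matrix (Fin m) (Fin N) ℝ} {K : ℕ} {δ : ℝ} {S : Finset (Fin N)}

theorem IsRIP.bounds_of_support_subset (hΦ : IsRIP Φ K δ) (hS : S.card ≤ K) {v : Fin N → ℝ}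
    (hv : support v ⊆ S) :
    (1 - δ) * (v ⬝ᵥ v) ≤ Φ *ᵥ v ⬝ᵥ Φ *ᵥ v ∧ Φ *ᵥ v ⬝ᵥ Φ *ᵥ v ≤ (1 + δ) * (v ⬝ᵥ v) := by
  have hcol : colMul Φ S (fun i => v i) = Φ *ᵥ v :=
    funext fun r => sum_coe_sort_of_support_subset S ((support_mul_subset_right _ _).trans hv)
  have hsq : ∑ i : S, v i ^ 2 = v ⬝ᵥ v := by
    simp only [sq]
    exact sum_coe_sort_of_support_subset S ((support_mul_subset_right _ _).trans hv)
  have h := hΦ S hS (fun i => v i)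
  beta_reduce at h
  rw [hcol, hsq] at h
  simpa only [sq, dotProduct] using h

theorem IsRIP.mulVec_dotProduct_mulVec_sub_le_half (hΦ : IsRIP Φ K δ) (hS : S.card ≤ K)
    {u v : Fin N → ℝ} (hu : support u ⊆ S) (hv : support v ⊆ S) :
    Φ *ᵥ u ⬝ᵥ Φ *ᵥ v - u ⬝ᵥ v ≤ δ / 2 * (u ⬝ᵥ u + v ⬝ᵥ v) := by
  have huv := Set.union_subset hu hv
  have hadd := (hΦ.bounds_of_support_subset hS (v := u + v) ((support_add u v).trans huv)).2
  have hsub := (hΦ.bounds_of_support_subset hS (v := u - v) ((support_sub u v).trans huv)).1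
  simp only [mulVec_add, mulVec_sub, add_dotProduct, dotProduct_add, sub_dotProduct,
    dotProduct_sub, dotProduct_comm v u, dotProduct_comm (Φ *ᵥ v) (Φ *ᵥ u)] at hadd hsub
  linarith

theorem IsRIP.mulVec_dotProduct_mulVec_le (hΦ : IsRIP Φ K δ) (hS : S.card ≤ K)
    {u v : Fin N → ℝ} (hu : support u ⊆ S) (hv : support v ⊆ S) :
    Φ *ᵥ u ⬝ᵥ Φ *ᵥ v ≤ u ⬝ᵥ v + δ * l2norm u * l2norm v := by
  rcases eq_or_ne u 0 with rfl | hu0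
  · simp [l2norm]
  rcases eq_or_ne v 0 with rfl | hv0
  · simp [l2norm]
  have hpos : 0 < l2norm u * l2norm v :=
    mul_pos ((l2norm_nonneg u).lt_of_ne' (l2norm_eq_zero.not.2 hu0))
      ((l2norm_nonneg v).lt_of_ne' (l2norm_eq_zero.not.2 hv0))
  -- rescale `u` and `v` to equal norms, where the AM-GM bound above is sharp
  have h := hΦ.mulVec_dotProduct_mulVec_sub_le_half hS
    ((support_const_smul_subset (l2norm v) u).trans hu)
    ((support_const_smul_subset (l2norm u) v).trans hv)
  simp only [mulVec_smul, smul_dotProduct, dotProduct_smul, smul_eq_mul, ← l2norm_sq] at h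
  refine le_of_mul_le_mul_left ?_ hpos
  linarith

end RIP

section Correlation

variable {m N : ℕ} {Φ : Matrix (Fin m) (Fin N) ℝ} {K : ℕ} {δ : ℝ} {x : Fin N → ℝ}

theorem l2norm_colTMul (Φ : Matrix (Fin m) (Fin N) ℝ) (S : Finset (Fin N)) (y : Fin m → ℝ) :
    l2norm (colTMul Φ S y) = l2norm ((S : Set (Fin N)).indicator (Φᵀ *ᵥ y)) :=
  l2norm_subtype S (Φᵀ *ᵥ y)

theorem IsRIP.one_sub_mul_l2norm_le (hΦ : IsRIP Φ K δ) {S : Finset (Fin N)} (hS : S.card ≤ K)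
    (hx : support x ⊆ S) :
    (1 - δ) * l2norm x ≤ l2norm ((S : Set (Fin N)).indicator (Φᵀ *ᵥ (Φ *ᵥ x))) := by
  have key : (1 - δ) * l2norm x * l2norm x ≤
      l2norm x * l2norm ((S : Set (Fin N)).indicator (Φᵀ *ᵥ (Φ *ᵥ x))) :=
    calc (1 - δ) * l2norm x * l2norm x = (1 - δ) * (x ⬝ᵥ x) := by rw [← l2norm_sq]; ring
      _ ≤ Φ *ᵥ x ⬝ᵥ Φ *ᵥ x := (hΦ.bounds_of_support_subset hS hx).1
      _ = x ⬝ᵥ (S : Set (Fin N)).indicator (Φᵀ *ᵥ (Φ *ᵥ x)) := by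
        rw [dotProduct_indicator_of_support_subset hx, dotProduct_transpose_mulVec]
      _ ≤ _ := dotProduct_le_l2norm_mul_l2norm _ _
  rcases (l2norm_nonneg x).eq_or_lt with h0 | hpos
  · rw [← h0, mul_zero]
    exact l2norm_nonneg _
  · exact le_of_mul_le_mul_left (by linarith) hpos

theorem IsRIP.l2norm_indicator_inter_le (hΦ : IsRIP Φ K δ) (hδ : 0 ≤ δ) {T : Finset (Fin N)}
    (hT : T.card ≤ K) (hx : support x ⊆ T) (s : Set (Fin N)) :
    l2norm ((T ∩ s : Set (Fin N)).indicator (Φᵀ *ᵥ (Φ *ᵥ x))) ≤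
      (1 + δ) * l2norm ((T ∩ s : Set (Fin N)).indicator x) + δ * l2norm x := by
  set a := (T ∩ s : Set (Fin N)).indicator x
  set b := (T ∩ s : Set (Fin N))ᶜ.indicator x
  have ha : support a ⊆ T := Set.support_indicator_subset.trans Set.inter_subset_left
  have hb : support b ⊆ T := Set.support_indicator.trans_subset (Set.inter_subset_right.trans hx)
  have hc : 0 ≤ (1 + δ) * l2norm a + δ * l2norm x :=
    add_nonneg (mul_nonneg (by linarith) (l2norm_nonneg a)) (mul_nonneg hδ (l2norm_nonneg x))
  refine l2norm_indicator_le_of_forall_dotProduct_le hc fun w hw => ?_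
  have hwT : support w ⊆ T := hw.trans Set.inter_subset_left
  have hbw : b ⬝ᵥ w = 0 :=
    dotProduct_eq_zero_of_disjoint (disjoint_compl_left.mono Set.support_indicator_subset hw)
  have haw := dotProduct_le_l2norm_mul_l2norm a w
  have hbx : δ * l2norm b * l2norm w ≤ δ * l2norm x * l2norm w :=
    mul_le_mul_of_nonneg_right (mul_le_mul_of_nonneg_left (l2norm_indicator_le _ x) hδ)
      (l2norm_nonneg w)
  calc w ⬝ᵥ Φᵀ *ᵥ (Φ *ᵥ x) = Φ *ᵥ a ⬝ᵥ Φ *ᵥ w + Φ *ᵥ b ⬝ᵥ Φ *ᵥ w := by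
        rw [dotProduct_transpose_mulVec, ← add_dotProduct, ← mulVec_add,
          Set.indicator_self_add_compl]
    _ ≤ (a ⬝ᵥ w + δ * l2norm a * l2norm w) + (b ⬝ᵥ w + δ * l2norm b * l2norm w) :=
        add_le_add (hΦ.mulVec_dotProduct_mulVec_le hT ha hwT)
          (hΦ.mulVec_dotProduct_mulVec_le hT hb hwT)
    _ ≤ ((1 + δ) * l2norm a + δ * l2norm x) * l2norm w := by linarith

theorem IsRIP.l2norm_indicator_diff_le (hΦ : IsRIP Φ K δ) (hδ : 0 ≤ δ) {S T : Finset (Fin N)}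
    (hST : (S ∪ T).card ≤ K) (hx : support x ⊆ T) :
    l2norm ((S \ T : Set (Fin N)).indicator (Φᵀ *ᵥ (Φ *ᵥ x))) ≤ δ * l2norm x := by
  refine l2norm_indicator_le_of_forall_dotProduct_le (mul_nonneg hδ (l2norm_nonneg x))
    fun w hw => ?_
  have hwST : support w ⊆ ↑(S ∪ T) :=
    hw.trans (Set.sdiff_subset.trans (Finset.coe_subset.2 Finset.subset_union_left))
  have hxST : support x ⊆ ↑(S ∪ T) := hx.trans (Finset.coe_subset.2 Finset.subset_union_right)
  calc w ⬝ᵥ Φᵀ *ᵥ (Φ *ᵥ x) = Φ *ᵥ x ⬝ᵥ Φ *ᵥ w := dotProduct_transpose_mulVec Φ w _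
    _ ≤ x ⬝ᵥ w + δ * l2norm x * l2norm w := hΦ.mulVec_dotProduct_mulVec_le hST hxST hwST
    _ = δ * l2norm x * l2norm w := by
        rw [dotProduct_eq_zero_of_disjoint (Set.disjoint_sdiff_right.mono hx hw), zero_add]

end Correlation

section RIPConstant

variable {m N : ℕ} (Φ : Matrix (Fin m) (Fin N) ℝ)

theorem exists_isRIP (K : ℕ) : ∃ δ, 0 ≤ δ ∧ IsRIP Φ K δ := by
  set C := ∑ r, ∑ i, Φ r i ^ 2
  have hC : 0 ≤ C := by positivity
  refine ⟨C + 1, by positivity, fun I _ q => ?_⟩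
  have hQ : 0 ≤ ∑ i, q i ^ 2 := by positivity
  have hrow : ∀ r, colMul Φ I q r ^ 2 ≤ (∑ i, Φ r i ^ 2) * ∑ i, q i ^ 2 := fun r =>
    calc colMul Φ I q r ^ 2 ≤ (∑ i : I, Φ r i ^ 2) * ∑ i, q i ^ 2 :=
          Finset.sum_mul_sq_le_sq_mul_sq _ _ _
      _ ≤ (∑ i, Φ r i ^ 2) * ∑ i, q i ^ 2 := by
          rw [Finset.sum_coe_sort I (fun i => Φ r i ^ 2)]
          gcongr
          exact I.subset_univ
  have hP : ∑ r, colMul Φ I q r ^ 2 ≤ C * ∑ i, q i ^ 2 :=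
    (Finset.sum_le_sum fun r _ => hrow r).trans_eq (Finset.sum_mul _ _ _).symm
  have hP₀ : 0 ≤ ∑ r, colMul Φ I q r ^ 2 := by positivity
  constructor <;> nlinarith

theorem isClosed_setOf_isRIP (K : ℕ) : IsClosed {δ | 0 ≤ δ ∧ IsRIP Φ K δ} := by
  simp only [IsRIP, Set.ofPred_and, Set.ofPred_forall]
  exact (isClosed_le continuous_const continuous_id).inter <|
    isClosed_iInter fun I => isClosed_iInter fun _ => isClosed_iInter fun q =>
      (isClosed_le (by fun_prop) continuous_const).inter
        (isClosed_le continuous_const (by fun_prop))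

theorem ripConst_mem (K : ℕ) : ripConst Φ K ∈ {δ | 0 ≤ δ ∧ IsRIP Φ K δ} :=
  (isClosed_setOf_isRIP Φ K).csInf_mem (exists_isRIP Φ K) ⟨0, fun _ h => h.1⟩

theorem ripConst_mono_s7 {K K' : ℕ} (hK : K ≤ K') : ripConst Φ K ≤ ripConst Φ K' :=
  csInf_le_csInf ⟨0, fun _ h => h.1⟩ (exists_isRIP Φ K')
    fun _ h => ⟨h.1, fun I hI => h.2 I (hI.trans hK)⟩

end RIPConstant

theorem initialization_capture {m N : ℕ} (Φ : Matrix (Fin m) (Fin N) ℝ) (K : ℕ)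
    (x : Fin N → ℝ) (T T0 : Finset (Fin N))
    (hsupp : ∀ i, i ∉ T → x i = 0) (hT : T.card ≤ K)
    (hT0 : T0.card = K)
    (hmax : ∀ S : Finset (Fin N), S.card ≤ K →
      l2norm (colTMul Φ S (Φ.mulVec x)) ≤ l2norm (colTMul Φ T0 (Φ.mulVec x))) :
    (1 - ripConst Φ K - 2 * ripConst Φ (2 * K)) / (1 + ripConst Φ K) * l2norm x ≤
      l2norm (fun i : (T ∩ T0 : Finset (Fin N)) => x i.1) := by
  obtain ⟨hδ, hΦ⟩ := ripConst_mem Φ K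
  obtain ⟨hδ₂, hΦ₂⟩ := ripConst_mem Φ (2 * K)
  have hx : support x ⊆ T := support_subset_iff'.2 hsupp
  have hcard : (T0 ∪ T).card ≤ 2 * K := (Finset.card_union_le T0 T).trans (by omega)
  have hlower := (hΦ.one_sub_mul_l2norm_le hT hx).trans
    (by simpa only [l2norm_colTMul] using hmax T hT)
  have hsplit := l2norm_indicator_le_inter_add_diff (T0 : Set (Fin N)) T (Φᵀ *ᵥ (Φ *ᵥ x))
  have hinter := hΦ.l2norm_indicator_inter_le hδ hT hx T0
  have hdiff := hΦ₂.l2norm_indicator_diff_le hδ₂ hcard hx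
  have hmono := mul_le_mul_of_nonneg_right (ripConst_mono_s7 Φ (by omega : K ≤ 2 * K))
    (l2norm_nonneg x)
  rw [l2norm_subtype, Finset.coe_inter, div_mul_eq_mul_div, div_le_iff₀ (by linarith)]
  linarith
end
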